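/- arXiv:2111.10691 — 3 statements merged into one kernel-verified Lean document; each statement's English description precedes it below -/
import Mathlib

section
/- Let λ ∈ ℂ∖{0} and b ∈ ℂ. The only invariant pairs for Ω_𝒯(λ,b) are ({0},{0}) and (Q,Q) if and only if b ≠ 1/2 (i.e., Ω_𝒯(λ,b) is an irreducible module over the N=2 Ramond algebra if and only if b ≠ 1/2). Moreover, when b = 1/2 the pair (Q, x·Q) is a nonzero proper invariant pair for Ω_𝒯(λ,1/2). -/
/- STATEMENT 12: For λ ≠ 0 and b ∈ ℂ, Ω_𝒯(λ,b) is an irreducible module over the N=2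
Ramond algebra (only invariant pairs ({0},{0}) and (Q,Q)) if and only if b ≠ 1/2;
moreover for b = 1/2 the pair (Q, x·Q) is a nonzero proper invariant pair. -/

open Polynomial

noncomputable section

abbrev Qp := Polynomial ℂ

/-- `L_m(p,q) = (λ^m(x+m(b−1))·p(x−m), λ^m(x+m(b−1/2))·q(x−m))` -/
def OL (lam b : ℂ) (m : ℤ) : Qp × Qp → Qp × Qp :=
  fun w => (lam ^ m • ((X + C ((m : ℂ) * (b - 1))) * w.1.comp (X - C (m : ℂ))),
            lam ^ m • ((X + C ((m : ℂ) * (b - 1 / 2))) * w.2.comp (X - C (m : ℂ))))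

/-- `H_m(p,q) = (−2b·λ^m·p(x−m), (1−2b)·λ^m·q(x−m))` -/
def OH (lam b : ℂ) (m : ℤ) : Qp × Qp → Qp × Qp :=
  fun w => ((-2 * b * lam ^ m) • w.1.comp (X - C (m : ℂ)),
            ((1 - 2 * b) * lam ^ m) • w.2.comp (X - C (m : ℂ)))

/-- `G_m⁺(p,q) = (0, −2λ^m(x+m(2b−1))·p(x−m))` -/
def OGp (lam b : ℂ) (m : ℤ) : Qp × Qp → Qp × Qp :=
  fun w => (0, (-2 * lam ^ m) • ((X + C ((m : ℂ) * (2 * b - 1))) * w.1.comp (X - C (m : ℂ))))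

/-- `G_m⁻(p,q) = (λ^m·q(x−m), 0)` -/
def OGm (lam : ℂ) (m : ℤ) : Qp × Qp → Qp × Qp :=
  fun w => (lam ^ m • w.2.comp (X - C (m : ℂ)), 0)

/-- `(S₀, S₁)` is an invariant pair for `Ω_𝒯(λ,b)`. -/
def OInvT (lam b : ℂ) (S₀ S₁ : Submodule ℂ Qp) : Prop :=
  ∀ m : ℤ, ∀ p ∈ S₀, ∀ q ∈ S₁,
    (OL lam b m (p, q)).1 ∈ S₀ ∧ (OL lam b m (p, q)).2 ∈ S₁ ∧
    (OH lam b m (p, q)).1 ∈ S₀ ∧ (OH lam b m (p, q)).2 ∈ S₁ ∧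
    (OGp lam b m (p, q)).1 ∈ S₀ ∧ (OGp lam b m (p, q)).2 ∈ S₁ ∧
    (OGm lam m (p, q)).1 ∈ S₀ ∧ (OGm lam m (p, q)).2 ∈ S₁

/-- the subspace `x·ℂ[x]` -/
def xQ : Submodule ℂ Qp := LinearMap.range (LinearMap.mulLeft ℂ (X : Qp))



lemma aux_const (q : Qp) (h : q.comp (X - C (1:ℂ)) = q) : q.natDegree = 0 := by
  have key : ∀ a : ℂ, q.eval (a - 1) = q.eval a := by
    intro a
    conv_rhs => rw [← h]
    simp [eval_comp]
  have heval : ∀ n : ℕ, q.eval (-(n:ℂ)) = q.eval 0 := by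
    intro n
    induction n with
    | zero => simp
    | succ n ih =>
      have := key (-(n:ℂ))
      push_cast
      rw [show -((n:ℂ)+1) = -(n:ℂ) - 1 by ring, this, ih]
  have hz : q - C (q.eval 0) = 0 := by
    apply Polynomial.eq_zero_of_infinite_isRoot
    apply Set.infinite_of_injective_forall_mem
      (f := fun n : ℕ => -(n : ℂ))
    · exact fun a b hab => Nat.cast_injective (neg_injective hab)
    · intro n
      simp [Polynomial.IsRoot, heval n]
  have : q = C (q.eval 0) := by linear_combination hz
  rw [this, natDegree_C]

lemma aux_drop (q : Qp) (n : ℕ) (hdeg : q.natDegree = n + 1) :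
    q.comp (X - C (1:ℂ)) - q ≠ 0 ∧ (q.comp (X - C (1:ℂ)) - q).natDegree ≤ n := by
  have hq0 : q ≠ 0 := by
    intro h; rw [h] at hdeg; simp at hdeg
  have hr : q.comp (X - C (1:ℂ)) = q.comp (X - C (1:ℂ)) := rfl
  have hlin : (X - C (1:ℂ)).natDegree = 1 := natDegree_X_sub_C 1
  have hrd : (q.comp (X - C (1:ℂ))).natDegree = n + 1 := by
    rw [hr, natDegree_comp, hlin, mul_one, hdeg]
  have hr0 : q.comp (X - C (1:ℂ)) ≠ 0 := by
    intro h; rw [h] at hrd; simp at hrd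
  have hlc : (q.comp (X - C (1:ℂ))).leadingCoeff = q.leadingCoeff := by
    rw [hr, leadingCoeff_comp (by rw [hlin]; norm_num)]
    rw [leadingCoeff_X_sub_C, one_pow, mul_one]
  have hne : q.comp (X - C (1:ℂ)) - q ≠ 0 := by
    intro h
    have : q.comp (X - C (1:ℂ)) = q := by linear_combination h
    have := aux_const q this
    omega
  have hdlt : (q.comp (X - C (1:ℂ)) - q).degree < (q.comp (X - C (1:ℂ))).degree := degree_sub_lt (by rw [degree_eq_natDegree hr0, degree_eq_natDegree hq0, hrd, hdeg]) hr0 hlc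
  have hlt : (q.comp (X - C (1:ℂ)) - q).natDegree < n + 1 := by
    rw [← hrd]; exact natDegree_lt_natDegree hne hdlt
  exact ⟨hne, by omega⟩

lemma aux_top (S : Submodule ℂ Qp) (hne : ∃ q ∈ S, q ≠ 0)
    (hshift : ∀ q ∈ S, q.comp (X - C (1:ℂ)) ∈ S)
    (hx : ∀ q ∈ S, (X : Qp) * q ∈ S) : S = ⊤ := by
  have hone : (1 : Qp) ∈ S := by
    obtain ⟨q, hq, hq0⟩ := hne
    have key : ∀ n : ℕ, ∀ q ∈ S, q ≠ 0 → q.natDegree ≤ n → (1 : Qp) ∈ S := by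
      intro n
      induction n with
      | zero =>
        intro q hq hq0 hd
        have hd0 : q.natDegree = 0 := Nat.le_zero.mp hd
        have : q = C (q.coeff 0) := Polynomial.eq_C_of_natDegree_eq_zero hd0
        have hc : q.coeff 0 ≠ 0 := by
          intro h; rw [h, map_zero] at this; exact hq0 this
        have : (1 : Qp) = (q.coeff 0)⁻¹ • q := by
          rw [this]; rw [smul_C]; simp [inv_mul_cancel₀ hc]
        rw [this]
        exact S.smul_mem _ hq
      | succ n ih =>
        intro q hq hq0 hd
        by_cases hd' : q.natDegree ≤ n
        · exact ih q hq hq0 hd'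
        · have hdeg : q.natDegree = n + 1 := by omega
          obtain ⟨hne', hle⟩ := aux_drop q n hdeg
          exact ih _ (S.sub_mem (hshift q hq) hq) hne' hle
    exact key q.natDegree q hq hq0 le_rfl
  have hmon : ∀ k : ℕ, (X : Qp) ^ k ∈ S := by
    intro k
    induction k with
    | zero => simpa using hone
    | succ k ih =>
      rw [pow_succ, mul_comm]
      exact hx _ ih
  rw [Submodule.eq_top_iff']
  intro p
  induction p using Polynomial.induction_on' with
  | add f g hf hg => exact S.add_mem hf hg
  | monomial k a =>
    rw [← Polynomial.smul_X_eq_monomial]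
    exact S.smul_mem _ (hmon k)

lemma mem_xQ_mul (u : Qp) : (X : Qp) * u ∈ xQ := ⟨u, rfl⟩

lemma inv_half (lam : ℂ) : OInvT lam (1/2) ⊤ xQ := by
  intro m p hp q hq
  simp only [OL, OH, OGp, OGm]
  refine ⟨Submodule.mem_top, ?_, Submodule.mem_top, ?_, Submodule.mem_top, ?_,
    Submodule.mem_top, ?_⟩
  · rw [show (1:ℂ)/2 - 1/2 = 0 by norm_num, mul_zero, map_zero, add_zero, ← mul_smul_comm]
    exact mem_xQ_mul _
  · rw [show (1:ℂ) - 2*(1/2) = 0 by norm_num, zero_mul, zero_smul]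
    exact zero_mem _
  · rw [show (2:ℂ)*(1/2) - 1 = 0 by norm_num, mul_zero, map_zero, add_zero, ← mul_smul_comm]
    exact mem_xQ_mul _
  · exact zero_mem _

theorem stmt12 (lam : ℂ) (hlam : lam ≠ 0) (b : ℂ) :
    ((∀ S₀ S₁ : Submodule ℂ Qp, OInvT lam b S₀ S₁ →
        (S₀ = ⊥ ∧ S₁ = ⊥) ∨ (S₀ = ⊤ ∧ S₁ = ⊤)) ↔ b ≠ 1 / 2) ∧
    (OInvT lam (1 / 2) ⊤ xQ ∧ xQ ≠ ⊥ ∧ xQ ≠ ⊤) := by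
  have hbot : xQ ≠ ⊥ := by
    intro h
    have hX : (X : Qp) ∈ xQ := by simpa using mem_xQ_mul 1
    rw [h, Submodule.mem_bot] at hX
    exact X_ne_zero hX
  have htop : xQ ≠ ⊤ := by
    intro h
    have h1 : (1 : Qp) ∈ xQ := h ▸ Submodule.mem_top
    obtain ⟨y, hy⟩ := h1
    have := congrArg (Polynomial.eval (0:ℂ)) hy
    simp at this
  refine ⟨⟨?_, ?_⟩, inv_half lam, hbot, htop⟩
  · intro hAll hb
    subst hb
    rcases hAll ⊤ xQ (inv_half lam) with ⟨h0, h1⟩ | ⟨h0, h1⟩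
    · exact hbot h1
    · exact htop h1
  · intro hb S₀ S₁ hInv
    by_cases h1 : S₁ = ⊥
    · left
      refine ⟨?_, h1⟩
      rw [Submodule.eq_bot_iff]
      intro p hp
      have hmem := (hInv 0 p hp 0 (S₁.zero_mem)).2.2.2.2.2.1
      rw [h1, Submodule.mem_bot] at hmem
      simp only [OGp, Int.cast_zero, zero_mul, map_zero, add_zero, sub_zero, comp_X,
        zpow_zero, mul_one] at hmem
      have hX : (X : Qp) * p = 0 := by
        rcases smul_eq_zero.mp hmem with h | h
        · norm_num at h
        · exact h
      rcases mul_eq_zero.mp hX with h | h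
      · exact absurd h X_ne_zero
      · exact h
    · right
      obtain ⟨q0, hq0mem, hq0⟩ := (Submodule.ne_bot_iff S₁).mp h1
      have hb2 : (1:ℂ) - 2*b ≠ 0 := fun h => hb (by linear_combination (-1/2 : ℂ) * h)
      have hshift : ∀ q ∈ S₁, q.comp (X - C (1:ℂ)) ∈ S₁ := by
        intro q hq
        have hmem := (hInv 1 0 (S₀.zero_mem) q hq).2.2.2.1
        simp only [OH, zpow_one, Int.cast_one] at hmem
        exact (Submodule.smul_mem_iff S₁ (mul_ne_zero hb2 hlam)).mp hmem
      have hx : ∀ q ∈ S₁, (X : Qp) * q ∈ S₁ := by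
        intro q hq
        have hmem := (hInv 0 0 (S₀.zero_mem) q hq).2.1
        simpa only [OL, Int.cast_zero, zero_mul, map_zero, add_zero, sub_zero, comp_X,
          zpow_zero, one_smul] using hmem
      have hS1 : S₁ = ⊤ := aux_top S₁ ⟨q0, hq0mem, hq0⟩ hshift hx
      refine ⟨?_, hS1⟩
      rw [Submodule.eq_top_iff']
      intro p
      have hmem := (hInv 0 0 (S₀.zero_mem) p (hS1 ▸ Submodule.mem_top)).2.2.2.2.2.2.1
      simpa only [OGm, Int.cast_zero, map_zero, sub_zero, comp_X, zpow_zero, one_smul] using hmem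

end
end

section
/- Let λ ∈ ℂ∖{0}, let S = Q × (x·Q) ⊆ Q × Q, and define φ : S → Q × Q by φ(p, x·q) = (q, −p). Then φ is a well-defined ℂ-linear bijection from S onto Q × Q, the pair (Q, x·Q) is invariant for Ω_ℛ(λ,1/2), and for all m ∈ ℤ and all v ∈ S: φ(L_m^{(λ,1/2)}(v)) = L_m^{(λ,0)}(φ(v)) and φ(G_m^{(λ,1/2)}(v)) = G_m^{(λ,0)}(φ(v)), where superscripts indicate the operators of Ω_ℛ(λ,1/2) and Ω_ℛ(λ,0) respectively. Thus the irreducible submodule (Q, x·Q) of Ω_ℛ(λ,1/2) is isomorphic, via the parity-reversing map φ, to Ω_ℛ(λ,0). -/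
/- STATEMENT 13: For λ ≠ 0, S = Q × x·Q and φ : S → Q × Q, φ(p, x·q) = (q, −p), φ is a
well-defined ℂ-linear bijection onto Q × Q, (Q, x·Q) is invariant for Ω_ℛ(λ,1/2), and φ
intertwines the operators of Ω_ℛ(λ,1/2) with those of Ω_ℛ(λ,0).  We formalize this via
the (two-sided) inverse map ι = φ⁻¹ : Q × Q → S, ι(a,b) = (−b, x·a) (so ι(q,−p) = (p, x·q)):
ι is an injective ℂ-linear map with range S = Q × x·Q which intertwines the operators of
Ω_ℛ(λ,0) with those of Ω_ℛ(λ,1/2); this says exactly that the irreducible submodule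
(Q, x·Q) of Ω_ℛ(λ,1/2) is isomorphic, via the parity-reversing map φ, to Ω_ℛ(λ,0). -/

open Polynomial

noncomputable section

/-- `G_m(p,q) = (−λ^m·q(x−m), λ^m(x+m(2b−1))·p(x−m))` -/
def OG (lam b : ℂ) (m : ℤ) : Qp × Qp → Qp × Qp :=
  fun w => (-(lam ^ m • w.2.comp (X - C (m : ℂ))),
            lam ^ m • ((X + C ((m : ℂ) * (2 * b - 1))) * w.1.comp (X - C (m : ℂ))))

/-- `(S₀, S₁)` is an invariant pair for `Ω_ℛ(λ,b)`. -/
def OInvR (lam b : ℂ) (S₀ S₁ : Submodule ℂ Qp) : Prop :=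
  ∀ m : ℤ, ∀ p ∈ S₀, ∀ q ∈ S₁,
    (OL lam b m (p, q)).1 ∈ S₀ ∧ (OL lam b m (p, q)).2 ∈ S₁ ∧
    (OG lam b m (p, q)).1 ∈ S₀ ∧ (OG lam b m (p, q)).2 ∈ S₁

/-- `ι = φ⁻¹ : Q × Q → Q × x·Q`, `ι(a,b) = (−b, x·a)`, the inverse of
`φ(p, x·q) = (q, −p)`. -/
def iota : Qp × Qp → Qp × Qp := fun w => (-w.2, X * w.1)

lemma mem_xQ (r : Qp) : X * r ∈ xQ := ⟨r, rfl⟩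

theorem stmt13 (lam : ℂ) (hlam : lam ≠ 0) :
    (∀ p q : Qp, iota (q, -p) = (p, X * q)) ∧
    IsLinearMap ℂ iota ∧
    Function.Injective iota ∧
    Set.range iota = {w : Qp × Qp | w.2 ∈ xQ} ∧
    OInvR lam (1 / 2) ⊤ xQ ∧
    (∀ m : ℤ, ∀ w : Qp × Qp, OL lam (1 / 2) m (iota w) = iota (OL lam 0 m w)) ∧
    (∀ m : ℤ, ∀ w : Qp × Qp, OG lam (1 / 2) m (iota w) = iota (OG lam 0 m w)) := by
  refine ⟨fun p q => by simp [iota], ?_, ?_, ?_, ?_, ?_, ?_⟩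
  · constructor
    · intro u v; simp [iota, Prod.ext_iff, mul_add, neg_add, add_comm]
    · intro c u; simp [iota, Prod.ext_iff, smul_neg, mul_smul_comm]
  · intro u v h
    simp only [iota, Prod.ext_iff, neg_inj] at h
    obtain ⟨h1, h2⟩ := h
    exact Prod.ext (mul_left_cancel₀ X_ne_zero h2) h1
  · ext w
    constructor
    · rintro ⟨u, rfl⟩; exact mem_xQ u.1
    · rintro ⟨r, hr⟩
      simp only [LinearMap.mulLeft_apply] at hr
      exact ⟨(r, -w.1), by simp [iota, Prod.ext_iff, hr]⟩
  · intro m p _ q hq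
    obtain ⟨r, hr⟩ := hq
    simp only [LinearMap.mulLeft_apply] at hr
    refine ⟨trivial, ?_, trivial, ?_⟩
    · refine ⟨C (lam ^ m) * ((X - C (m:ℂ)) * r.comp (X - C (m:ℂ))), ?_⟩
      simp only [LinearMap.mulLeft_apply, OL, ← hr, smul_eq_C_mul, mul_comp, X_comp, C_comp,
        sub_comp]
      have h0 : ((m:ℂ) * (1/2 - 1/2)) = 0 := by ring
      rw [h0, map_zero]
      ring
    · refine ⟨C (lam ^ m) * p.comp (X - C (m:ℂ)), ?_⟩
      simp only [LinearMap.mulLeft_apply, OG, smul_eq_C_mul]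
      push_cast
      ring_nf
      simp
  · intro m w
    simp only [OL, iota, Prod.ext_iff, smul_eq_C_mul, mul_comp, X_comp, C_comp, sub_comp,
      neg_comp]
    constructor <;> (push_cast; ring_nf; try simp; try ring)
  · intro m w
    simp only [OG, iota, Prod.ext_iff, smul_eq_C_mul, mul_comp, X_comp, C_comp, sub_comp,
      neg_comp]
    constructor <;> (push_cast; ring_nf; try simp; try ring)

end
end

section
/- Let λ₁, λ₂ ∈ ℂ∖{0} and b₁, b₂ ∈ ℂ with b₁ ≠ 1/2 and b₂ ≠ 1/2. There exists a ℂ-linear bijection ψ : Q × Q → Q × Q that is grading-homogeneous (i.e., either ψ(Q×{0}) = Q×{0} and ψ({0}×Q) = {0}×Q, or ψ(Q×{0}) = {0}×Q and ψ({0}×Q) = Q×{0}) and intertwines all the operators of Ω_𝒯(λ₁,b₁) with those of Ω_𝒯(λ₂,b₂) (i.e., ψ∘L_m^{(λ₁,b₁)} = L_m^{(λ₂,b₂)}∘ψ, ψ∘H_m^{(λ₁,b₁)} = H_m^{(λ₂,b₂)}∘ψ, ψ∘G_m^{±,(λ₁,b₁)} = G_m^{±,(λ₂,b₂)}∘ψ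 for all m ∈ ℤ), if and only if λ₁ = λ₂ and b₁ = b₂. -/
/- STATEMENT 15: For λ₁, λ₂ ≠ 0 and b₁, b₂ ≠ 1/2, there is a grading-homogeneous
ℂ-linear bijection ψ of Q × Q intertwining all the operators of Ω_𝒯(λ₁,b₁) with those
of Ω_𝒯(λ₂,b₂) if and only if λ₁ = λ₂ and b₁ = b₂. -/

open Polynomial

noncomputable section

/-!
`H₀` acts by the scalar `-2b` on the even part and by `1 - 2b` on the odd part, so an
intertwiner sends the `-2b₁`-eigenvector `(1, 0)` to a `-2b₁`-eigenvector of `H₀^{(λ₂,b₂)}`.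
A parity-swapping ψ would force `-2b₁ = 1 - 2b₂` and `1 - 2b₁ = -2b₂`, which is absurd; a
parity-preserving one forces `b₁ = b₂`. Writing `ψ(1, 0) = (u, 0)`, the relation `L₀ = X·`
gives `ψ(X, 0) = (X u, 0)`, and then `L₁` on `(1, 0)` reads
`λ₁ (X + b₁ - 1) u = λ₂ (X + b₂ - 1) u(x - 1)`; comparing leading coefficients gives `λ₁ = λ₂`.
-/

theorem eigenvalue_eq_of_intertwining {R M N : Type*} [Ring R] [IsCancelMulZero R]
    [AddCommGroup M] [AddCommGroup N] [Module R M] [Module R N] [Module.IsTorsionFree R N]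
    (ψ : M →ₗ[R] N) {S : M → M} {T : N → N} (h : ∀ w, ψ (S w) = T (ψ w)) {w : M} {c c' : R}
    (hS : S w = c • w) (hT : T (ψ w) = c' • ψ w) (hw : ψ w ≠ 0) : c = c' :=
  smul_left_injective R hw <| show c • ψ w = c' • ψ w by rw [← map_smul, ← hS, h, hT]

theorem OH_zero_of_snd_eq_zero (lam b : ℂ) {w : Qp × Qp} (hw : w.2 = 0) :
    OH lam b 0 w = (-2 * b) • w := by
  ext <;> simp [OH, hw]

theorem OH_zero_of_fst_eq_zero (lam b : ℂ) {w : Qp × Qp} (hw : w.1 = 0) :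
    OH lam b 0 w = (1 - 2 * b) • w := by
  ext <;> simp [OH, hw]

theorem OL_zero (lam b : ℂ) (w : Qp × Qp) : OL lam b 0 w = (X * w.1, X * w.2) := by
  simp [OL]

theorem OL_one_even (lam b : ℂ) (p : Qp) :
    OL lam b 1 (p, 0) = (lam • ((X + C (b - 1)) * p.comp (X - C 1)), 0) := by
  simp [OL]

theorem leadingCoeff_comp_X_sub_C (p : Qp) (d : ℂ) :
    (p.comp (X - C d)).leadingCoeff = p.leadingCoeff := by
  rw [leadingCoeff_comp (by rw [natDegree_X_sub_C]; exact one_ne_zero), leadingCoeff_X_sub_C,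
    one_pow, mul_one]

theorem lam_eq_of_intertwining_OL {lam₁ lam₂ b₁ b₂ : ℂ} (ψ : (Qp × Qp) →ₗ[ℂ] (Qp × Qp))
    (hL : ∀ m w, ψ (OL lam₁ b₁ m w) = OL lam₂ b₂ m (ψ w)) {u : Qp}
    (hu : ψ (1, 0) = (u, 0)) (hu0 : u ≠ 0) : lam₁ = lam₂ := by
  have hX : ψ (X, 0) = (X * u, 0) := by simpa [OL_zero, hu] using hL 0 (1, 0)
  have hOL : OL lam₁ b₁ 1 (1, 0) = lam₁ • ((X, 0) + (b₁ - 1) • (1, 0)) := by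
    simp [OL, smul_eq_C_mul]
  have key :
      C lam₁ * ((X + C (b₁ - 1)) * u) = C lam₂ * ((X + C (b₂ - 1)) * u.comp (X - C 1)) := by
    have h := congrArg Prod.fst (hL 1 (1, 0))
    rw [hOL, map_smul, map_add, map_smul, hX, hu, OL_one_even] at h
    simp only [Prod.fst_add, Prod.smul_fst, smul_eq_C_mul, C_sub, C_1] at h ⊢
    linear_combination h
  have hlc := congrArg leadingCoeff key
  simp only [leadingCoeff_mul, leadingCoeff_C, leadingCoeff_X_add_C, one_mul,
    leadingCoeff_comp_X_sub_C] at hlc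
  exact mul_right_cancel₀ (leadingCoeff_ne_zero.2 hu0) hlc

theorem false_of_swaps_parity {lam₁ lam₂ b₁ b₂ : ℂ} (ψ : (Qp × Qp) →ₗ[ℂ] (Qp × Qp))
    (hH : ∀ w, ψ (OH lam₁ b₁ 0 w) = OH lam₂ b₂ 0 (ψ w)) {v w : Qp × Qp}
    (hv : v.2 = 0) (hψv : (ψ v).1 = 0) (hv0 : ψ v ≠ 0)
    (hw : w.1 = 0) (hψw : (ψ w).2 = 0) (hw0 : ψ w ≠ 0) : False := by
  have hv' : -2 * b₁ = 1 - 2 * b₂ := eigenvalue_eq_of_intertwining ψ hH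
    (OH_zero_of_snd_eq_zero _ _ hv) (OH_zero_of_fst_eq_zero _ _ hψv) hv0
  have hw' : 1 - 2 * b₁ = -2 * b₂ := eigenvalue_eq_of_intertwining ψ hH
    (OH_zero_of_fst_eq_zero _ _ hw) (OH_zero_of_snd_eq_zero _ _ hψw) hw0
  have : (2 : ℂ) = 0 := by linear_combination hw' - hv'
  exact two_ne_zero this

theorem stmt15_general (lam₁ lam₂ : ℂ)
    (b₁ b₂ : ℂ) :
    (∃ ψ : (Qp × Qp) ≃ₗ[ℂ] (Qp × Qp),
        ((⇑ψ '' {w : Qp × Qp | w.2 = 0} = {w : Qp × Qp | w.2 = 0} ∧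
          ⇑ψ '' {w : Qp × Qp | w.1 = 0} = {w : Qp × Qp | w.1 = 0}) ∨
         (⇑ψ '' {w : Qp × Qp | w.2 = 0} = {w : Qp × Qp | w.1 = 0} ∧
          ⇑ψ '' {w : Qp × Qp | w.1 = 0} = {w : Qp × Qp | w.2 = 0})) ∧
        (∀ m : ℤ, ∀ w : Qp × Qp, ψ (OL lam₁ b₁ m w) = OL lam₂ b₂ m (ψ w)) ∧
        (∀ m : ℤ, ∀ w : Qp × Qp, ψ (OH lam₁ b₁ m w) = OH lam₂ b₂ m (ψ w)) ∧
        (∀ m : ℤ, ∀ w : Qp × Qp, ψ (OGp lam₁ b₁ m w) = OGp lam₂ b₂ m (ψ w)) ∧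
        (∀ m : ℤ, ∀ w : Qp × Qp, ψ (OGm lam₁ m w) = OGm lam₂ m (ψ w))) ↔
      (lam₁ = lam₂ ∧ b₁ = b₂) := by
  refine ⟨fun ⟨ψ, hgrad, hL, hH, _⟩ => ?_, fun ⟨hlam, hb⟩ => ?_⟩
  · have h10 : ((1 : Qp), (0 : Qp)) ∈ {w : Qp × Qp | w.2 = 0} := rfl
    have h01 : ((0 : Qp), (1 : Qp)) ∈ {w : Qp × Qp | w.1 = 0} := rfl
    rcases hgrad with ⟨he, -⟩ | ⟨he, ho⟩
    · have hu : (ψ (1, 0)).2 = 0 := Set.image_subset_iff.1 he.le h10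
      have hne : ψ (1, 0) ≠ 0 := by simp
      have hb := eigenvalue_eq_of_intertwining ψ.toLinearMap (hH 0)
        (OH_zero_of_snd_eq_zero _ _ rfl) (OH_zero_of_snd_eq_zero _ _ hu) hne
      exact ⟨lam_eq_of_intertwining_OL ψ.toLinearMap hL (Prod.ext rfl hu)
        fun h => hne (Prod.ext h hu), by linear_combination hb / -2⟩
    · exact (false_of_swaps_parity ψ.toLinearMap (hH 0) rfl (Set.image_subset_iff.1 he.le h10)
        (by simp) rfl (Set.image_subset_iff.1 ho.le h01) (by simp)).elim
  · subst hlam hb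
    exact ⟨LinearEquiv.refl ℂ _, .inl ⟨Set.image_id _, Set.image_id _⟩, by simp, by simp,
      by simp, by simp⟩

theorem stmt15 (lam₁ lam₂ : ℂ) (h₁ : lam₁ ≠ 0) (h₂ : lam₂ ≠ 0)
    (b₁ b₂ : ℂ) (hb₁ : b₁ ≠ 1 / 2) (hb₂ : b₂ ≠ 1 / 2) :
    (∃ ψ : (Qp × Qp) ≃ₗ[ℂ] (Qp × Qp),
        ((⇑ψ '' {w : Qp × Qp | w.2 = 0} = {w : Qp × Qp | w.2 = 0} ∧
          ⇑ψ '' {w : Qp × Qp | w.1 = 0} = {w : Qp × Qp | w.1 = 0}) ∨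
         (⇑ψ '' {w : Qp × Qp | w.2 = 0} = {w : Qp × Qp | w.1 = 0} ∧
          ⇑ψ '' {w : Qp × Qp | w.1 = 0} = {w : Qp × Qp | w.2 = 0})) ∧
        (∀ m : ℤ, ∀ w : Qp × Qp, ψ (OL lam₁ b₁ m w) = OL lam₂ b₂ m (ψ w)) ∧
        (∀ m : ℤ, ∀ w : Qp × Qp, ψ (OH lam₁ b₁ m w) = OH lam₂ b₂ m (ψ w)) ∧
        (∀ m : ℤ, ∀ w : Qp × Qp, ψ (OGp lam₁ b₁ m w) = OGp lam₂ b₂ m (ψ w)) ∧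
        (∀ m : ℤ, ∀ w : Qp × Qp, ψ (OGm lam₁ m w) = OGm lam₂ m (ψ w))) ↔
      (lam₁ = lam₂ ∧ b₁ = b₂) :=
  stmt15_general lam₁ lam₂ b₁ b₂

end
end
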